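/- arXiv:1403.3781 — 2 statements merged into one kernel-verified Lean document; each statement's English description precedes it below -/
import Mathlib

section
/- Let H be an infinite-dimensional complex Hilbert space. For every k ≥ 1, the inductive geometric mean Gₖ is congruence invariant: for every invertible bounded operator C on H and every k-tuple (A₁,…,Aₖ) of positive definite invertible bounded operators, Gₖ(C*A₁C, …, C*AₖC) = C* Gₖ(A₁,…,Aₖ) C. -/
set_option synthInstance.maxHeartbeats 400000
set_option maxHeartbeats 1000000

noncomputable section

variable {H : Type*} [NormedAddCommGroup H] [InnerProductSpace ℂ H] [CompleteSpace H]

/-- `a` is a positive definite invertible bounded operator. -/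
def IsPosDefInv (a : H →L[ℂ] H) : Prop := 0 ≤ a ∧ IsUnit a

/-- The inductive geometric mean: `indGM k` is the geometric mean `G_{k+1}` of `k+1`
operator variables, defined recursively by `G₁(A) = A` and
`G_{k+1}(A₁,…,A_{k+1}) = A_{k+1}^{1/2} Gₖ(A_{k+1}^{-1/2}A₁A_{k+1}^{-1/2},…,A_{k+1}^{-1/2}AₖA_{k+1}^{-1/2})^{k/(k+1)} A_{k+1}^{1/2}`,
with fractional powers taken via the continuous functional calculus. -/
noncomputable def indGM : (k : ℕ) → (Fin (k + 1) → (H →L[ℂ] H)) → (H →L[ℂ] H)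
  | 0, A => A 0
  | (k + 1), A =>
      CFC.sqrt (A (Fin.last (k + 1))) *
        CFC.rpow
          (indGM k (fun i : Fin (k + 1) =>
            CFC.sqrt (Ring.inverse (A (Fin.last (k + 1)))) * A i.castSucc *
              CFC.sqrt (Ring.inverse (A (Fin.last (k + 1))))))
          ((k + 1 : ℝ) / (k + 2)) *
        CFC.sqrt (A (Fin.last (k + 1)))

open scoped NNReal Ring

/-! Induct on `k`. For the last entry `B` put `s = B^{1/2}` and `s' = (C⋆BC)^{1/2}`. Since
`(C⋆s)(C⋆s)⋆ = s'²`, the polar decomposition of the invertible `C⋆s` is `C⋆s = s'u` with `u`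
unitary. Hence `s'⁻¹(C⋆AᵢC)s'⁻¹ = u(s⁻¹Aᵢs⁻¹)u⋆`: the inner mean only sees a unitary congruence,
which commutes with the continuous functional calculus, and `s'u = C⋆s`, `u⋆s' = sC` turn the
outer congruence by `s'` into `C⋆(s · s)C`. -/

section StarRing

variable {R : Type*} [Ring R] [StarRing R] {p s c u : R}

lemma mul_conj_mul_eq_star_conj_of_star_mul_eq (hp : IsSelfAdjoint p) (hs : IsSelfAdjoint s)
    (h : star c * s = p * u) (a : R) :
    p * (u * a * star u) * p = star c * (s * a * s) * c := by
  have h' : star u * p = s * c := by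
    simpa [hp.star_eq, hs.star_eq] using congrArg star h.symm
  calc p * (u * a * star u) * p = p * u * a * (star u * p) := by simp only [mul_assoc]
    _ = star c * (s * a * s) * c := by rw [← h, h']; simp only [mul_assoc]

lemma Ring.inverse_mul_star_conj_mul_inverse (hp : IsUnit p) (hs : IsUnit s)
    (hp' : IsSelfAdjoint p) (hs' : IsSelfAdjoint s) (h : star c * s = p * u) (a : R) :
    p⁻¹ʳ * (star c * a * c) * p⁻¹ʳ = u * (s⁻¹ʳ * a * s⁻¹ʳ) * star u := by
  have hleft : p⁻¹ʳ * star c = u * s⁻¹ʳ := by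
    rw [← inverse_mul_cancel_left p u hp, ← h, mul_assoc, mul_assoc, mul_inverse_cancel s hs,
      mul_one]
  have hright : c * p⁻¹ʳ = s⁻¹ʳ * star u := by
    simpa [← inverse_star, hp'.star_eq, hs'.star_eq] using congrArg star hleft
  calc p⁻¹ʳ * (star c * a * c) * p⁻¹ʳ = p⁻¹ʳ * star c * a * (c * p⁻¹ʳ) := by
        simp only [mul_assoc]
    _ = u * (s⁻¹ʳ * a * s⁻¹ʳ) * star u := by
        rw [hleft, hright]; simp only [mul_assoc]

end StarRing

section CStarAlgebra

variable {A : Type*} [CStarAlgebra A] [PartialOrder A] [StarOrderedRing A]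

lemma CFC.rpow_unitary_conj (u : unitary A) {a : A} (ha : 0 ≤ a) {r : ℝ} (hr : 0 ≤ r) :
    ((u : A) * a * star (u : A)) ^ r = u * a ^ r * star (u : A) := by
  have := (Unitary.conjStarAlgAut ℂ A u).toStarAlgHom.map_cfc (fun x : ℝ≥0 => x ^ r) a
    (NNReal.continuousOn_rpow_const (Or.inr hr))
    ((continuous_mul_const _).comp (continuous_const_mul _)) ha
  simpa [CFC.rpow_def] using this.symm

lemma IsUnit.exists_unitary_eq_sqrt_mul_star_self_mul {x : A} (hx : IsUnit x) :
    ∃ u : unitary A, x = CFC.sqrt (x * star x) * u := by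
  have hxx : IsStrictlyPositive (x * star x) :=
    CStarAlgebra.isStrictlyPositive_iff_eq_mul_star_self.mpr ⟨x, hx, rfl⟩
  obtain ⟨p, hp⟩ := hxx.isUnit_cfcSqrt
  refine ⟨⟨p⁻¹ * x, ?_⟩, ?_⟩
  · obtain ⟨y, rfl⟩ := hx
    rw [Units.inv_mul_mem_unitary, Units.ext_iff]
    simp only [Units.val_mul, Units.coe_star, hp]
    rw [(CFC.sqrt_nonneg ((y : A) * star (y : A))).isSelfAdjoint.star_eq,
      CFC.sqrt_mul_sqrt_self _]
  · rw [← hp, ← mul_assoc, Units.mul_inv, one_mul]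

lemma IsStrictlyPositive.exists_unitary_star_mul_sqrt_eq {b c : A} (hb : IsStrictlyPositive b)
    (hc : IsUnit c) : ∃ u : unitary A, star c * CFC.sqrt b = CFC.sqrt (star c * b * c) * u := by
  obtain ⟨u, hu⟩ := (hc.star.mul hb.isUnit_cfcSqrt).exists_unitary_eq_sqrt_mul_star_self_mul
  refine ⟨u, hu.trans ?_⟩
  rw [star_mul, star_star, (CFC.sqrt_nonneg b).isSelfAdjoint.star_eq, mul_assoc,
    ← mul_assoc _ _ c, CFC.sqrt_mul_sqrt_self b, ← mul_assoc]

end CStarAlgebra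

lemma indGM_succ (k : ℕ) (A : Fin (k + 2) → (H →L[ℂ] H)) :
    indGM (k + 1) A =
      CFC.sqrt (A (Fin.last _)) *
        (indGM k fun i => (CFC.sqrt (A (Fin.last _)))⁻¹ʳ * A i.castSucc *
          (CFC.sqrt (A (Fin.last _)))⁻¹ʳ) ^ ((k + 1 : ℝ) / (k + 2)) *
        CFC.sqrt (A (Fin.last _)) := by
  simp only [indGM, CFC.sqrt_ringInverse]
  rfl

lemma indGM_nonneg {k : ℕ} {A : Fin (k + 1) → (H →L[ℂ] H)} (hA : 0 ≤ A 0) :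
    0 ≤ indGM k A := by
  cases k with
  | zero => exact hA
  | succ k =>
    rw [indGM_succ]
    exact (CFC.sqrt_nonneg _).isSelfAdjoint.conjugate_nonneg CFC.rpow_nonneg

lemma indGM_succ_star_conj {k : ℕ}
    (hunitary : ∀ (u : unitary (H →L[ℂ] H)) (T : Fin (k + 1) → (H →L[ℂ] H)),
      (∀ i, IsStrictlyPositive (T i)) →
        indGM k (fun i => (u : H →L[ℂ] H) * T i * star (u : H →L[ℂ] H)) =
          u * indGM k T * star (u : H →L[ℂ] H))
    {C : H →L[ℂ] H} (hC : IsUnit C) {A : Fin (k + 2) → (H →L[ℂ] H)}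
    (hA : ∀ i, IsStrictlyPositive (A i)) :
    indGM (k + 1) (fun i => star C * A i * C) = star C * indGM (k + 1) A * C := by
  simp only [indGM_succ]
  obtain ⟨u, hu⟩ := (hA (Fin.last _)).exists_unitary_star_mul_sqrt_eq hC
  set s := CFC.sqrt (A (Fin.last (k + 1)))
  set s' := CFC.sqrt (star C * A (Fin.last (k + 1)) * C)
  have hs : IsStrictlyPositive s := (hA _).sqrt
  have hs' : IsStrictlyPositive s' :=
    (hC.isStrictlyPositive_star_left_conjugate_iff.mpr (hA _)).sqrt
  have hT (i : Fin (k + 1)) : IsStrictlyPositive (s⁻¹ʳ * A i.castSucc * s⁻¹ʳ) :=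
    IsStrictlyPositive.conjugate_of_isUnit_of_isSelfAdjoint _ _ (isUnit_ringInverse.mpr hs.isUnit)
      hs.ringInverse.isSelfAdjoint (hA _)
  simp only [Ring.inverse_mul_star_conj_mul_inverse hs'.isUnit hs.isUnit hs'.isSelfAdjoint
    hs.isSelfAdjoint hu, hunitary u _ hT]
  rw [CFC.rpow_unitary_conj u (indGM_nonneg (hT 0).nonneg) (by positivity),
    mul_conj_mul_eq_star_conj_of_star_mul_eq hs'.isSelfAdjoint hs.isSelfAdjoint hu]

theorem indGM_congruence_invariant_general (k : ℕ)
    (C : H →L[ℂ] H) (hC : IsUnit C)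
    (A : Fin (k + 1) → (H →L[ℂ] H)) (hA : ∀ i, IsPosDefInv (A i)) :
    indGM k (fun i => star C * A i * C) = star C * indGM k A * C := by
  simp only [IsPosDefInv, ← IsStrictlyPositive.iff_of_unital] at hA
  induction k generalizing C with
  | zero => rfl
  | succ k ih =>
    refine indGM_succ_star_conj (fun u T hT => ?_) hC hA
    simpa using ih (star u) Unitary.isUnit_coe.star T hT

/-- **Congruence invariance of the inductive geometric mean.**
`Gₖ(C*A₁C,…,C*AₖC) = C* Gₖ(A₁,…,Aₖ) C` for every invertible operator `C`. -/
theorem indGM_congruence_invariant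
    (hH : ¬ FiniteDimensional ℂ H) (k : ℕ)
    (C : H →L[ℂ] H) (hC : IsUnit C)
    (A : Fin (k + 1) → (H →L[ℂ] H)) (hA : ∀ i, IsPosDefInv (A i)) :
    indGM k (fun i => star C * A i * C) = star C * indGM k A * C :=
  indGM_congruence_invariant_general k C hC A hA
end
end

section
/- For every k ≥ 1 and every k-tuple (A₁,…,Aₖ) of positive definite complex n×n matrices, the inductive geometric mean satisfies the determinant identity det Gₖ(A₁,…,Aₖ) = (det A₁ ⋯ det Aₖ)^{1/k}. -/
/-! By induction on `k`. For positive definite `M`, `cfc f M` is unitarily similar to the diagonal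
matrix of the `f (λᵢ)`, so `det (cfc f M) = ∏ f (λᵢ)`, and in particular `det M^r = (det M)^r`.
Since the recursion applies `√·` and `(·)^r` only to positive definite matrices (conjugating by a
positive definite matrix preserves positive definiteness), the determinants follow the scalar
recursion `g(d₁,…,d_{k+1}, b) = √b · g(d₁/b,…,d_{k+1}/b)^{(k+1)/(k+2)} · √b`, which the geometric
mean `(∏ dᵢ)^{1/(k+1)}` solves. -/

set_option synthInstance.maxHeartbeats 400000
set_option maxHeartbeats 1000000

open scoped ComplexOrder

noncomputable section

/-- The inductive geometric mean of positive definite complex matrices: `indGMMat k` is the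
geometric mean `G_{k+1}` of `k+1` matrix variables, defined recursively by `G₁(A) = A` and
`G_{k+1}(A₁,…,A_{k+1}) = A_{k+1}^{1/2} Gₖ(A_{k+1}^{-1/2}A₁A_{k+1}^{-1/2},…)^{k/(k+1)} A_{k+1}^{1/2}`,
with fractional powers of positive definite matrices taken via the continuous functional
calculus (spectral decomposition); here `B^{-1/2}` is the positive square root of `B⁻¹`. -/
noncomputable def indGMMat {n : ℕ} :
    (k : ℕ) → (Fin (k + 1) → Matrix (Fin n) (Fin n) ℂ) → Matrix (Fin n) (Fin n) ℂ
  | 0, A => A 0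
  | (k + 1), A =>
      cfc Real.sqrt (A (Fin.last (k + 1))) *
        cfc (fun x : ℝ => x ^ ((k + 1 : ℝ) / (k + 2)))
          (indGMMat k (fun i : Fin (k + 1) =>
            cfc Real.sqrt ((A (Fin.last (k + 1)))⁻¹) * A i.castSucc *
              cfc Real.sqrt ((A (Fin.last (k + 1)))⁻¹))) *
        cfc Real.sqrt (A (Fin.last (k + 1)))

namespace Matrix

variable {m : Type*} [Fintype m] [DecidableEq m] {M : Matrix m m ℂ}

theorem IsHermitian.re_det (hM : M.IsHermitian) : M.det.re = ∏ i, hM.eigenvalues i := by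
  rw [hM.det_eq_prod_eigenvalues]
  norm_cast

theorem IsHermitian.ofReal_re_det (hM : M.IsHermitian) : ((M.det.re : ℝ) : ℂ) = M.det := by
  rw [hM.re_det, hM.det_eq_prod_eigenvalues]
  norm_cast

theorem PosDef.re_det_pos (hM : M.PosDef) : 0 < M.det.re :=
  (Complex.pos_iff.1 hM.det_pos).1

theorem IsHermitian.det_cfc (hM : M.IsHermitian) (f : ℝ → ℝ) :
    (cfc f M).det = ∏ i, (f (hM.eigenvalues i) : ℂ) := by
  rw [hM.cfc_eq]
  simp [IsHermitian.cfc, -Unitary.conjStarAlgAut_apply]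

theorem PosDef.det_cfc_rpow (hM : M.PosDef) (r : ℝ) :
    (cfc (fun x : ℝ => x ^ r) M).det = ((M.det.re ^ r : ℝ) : ℂ) := by
  rw [hM.isHermitian.det_cfc, hM.isHermitian.re_det,
    ← Real.finsetProd_rpow _ _ fun i _ => (hM.eigenvalues_pos i).le]
  norm_cast

theorem PosDef.det_cfc_sqrt (hM : M.PosDef) : (cfc Real.sqrt M).det = (√M.det.re : ℂ) := by
  simpa only [← Real.sqrt_eq_rpow] using hM.det_cfc_rpow (1 / 2)

open scoped MatrixOrder in
theorem PosDef.cfc {f : ℝ → ℝ} (hf : ∀ x, 0 < x → 0 < f x) (hM : M.PosDef) :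
    (cfc f M).PosDef := by
  have hspec : ∀ x ∈ spectrum ℝ M, 0 < x :=
    (StarOrderedRing.isStrictlyPositive_iff_spectrum_pos M hM.isHermitian.isSelfAdjoint).1
      hM.isStrictlyPositive
  rw [← isStrictlyPositive_iff_posDef, cfc_isStrictlyPositive_iff f M
    (M.finite_real_spectrum.continuousOn f) hM.isHermitian.isSelfAdjoint]
  exact fun x hx => hf x (hspec x hx)

theorem PosDef.mul_mul_same (hM : M.PosDef) {S : Matrix m m ℂ} (hS : S.IsHermitian)
    (hSu : IsUnit S) : (S * M * S).PosDef := by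
  simpa only [hS.eq] using hM.mul_mul_conjTranspose_same (vecMul_injective_iff_isUnit.2 hSu)

end Matrix

theorem Real.sqrt_mul_rpow_mul_sqrt {b P : ℝ} (hb : 0 < b) (hP : 0 ≤ P) (m : ℕ) :
    √b * ((b⁻¹ ^ (m + 1) * P) ^ ((m : ℝ) + 1)⁻¹) ^ (((m : ℝ) + 1) / ((m : ℝ) + 2)) * √b =
      (P * b) ^ ((m : ℝ) + 2)⁻¹ := by
  have hroot : (b⁻¹ ^ (m + 1) * P) ^ ((m : ℝ) + 1)⁻¹ = b⁻¹ * P ^ ((m : ℝ) + 1)⁻¹ := by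
    rw [Real.mul_rpow (by positivity) hP, ← Nat.cast_succ,
      Real.pow_rpow_inv_natCast (by positivity) m.succ_ne_zero]
  have hb' : b * b⁻¹ ^ (((m : ℝ) + 1) / ((m : ℝ) + 2)) = b ^ ((m : ℝ) + 2)⁻¹ := by
    rw [Real.inv_rpow hb.le, ← Real.rpow_neg hb.le]
    nth_rewrite 1 [← Real.rpow_one b]
    rw [← Real.rpow_add hb]
    congr 1
    field_simp
    ring
  rw [hroot, Real.mul_rpow (by positivity) (by positivity), ← Real.rpow_mul hP, mul_comm √b,
    mul_assoc, Real.mul_self_sqrt hb.le, mul_right_comm, mul_comm (b⁻¹ ^ _) b, hb',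
    Real.mul_rpow hP hb.le, mul_comm]
  congr 2
  field_simp

open Matrix

theorem posDef_indGMMat {n : ℕ} :
    ∀ (k : ℕ) (A : Fin (k + 1) → Matrix (Fin n) (Fin n) ℂ), (∀ i, (A i).PosDef) →
      (indGMMat k A).PosDef
  | 0, A, hA => hA 0
  | k + 1, A, hA => by
    have hB := hA (Fin.last (k + 1))
    have hS := hB.cfc fun _ => Real.sqrt_pos.2
    have hT := hB.inv.cfc fun _ => Real.sqrt_pos.2
    have hG := posDef_indGMMat k _ fun i => (hA i.castSucc).mul_mul_same hT.isHermitian hT.isUnit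
    rw [indGMMat]
    exact (hG.cfc fun _ hx => Real.rpow_pos_of_pos hx _).mul_mul_same hS.isHermitian hS.isUnit

theorem det_indGMMat {n : ℕ} :
    ∀ (k : ℕ) (A : Fin (k + 1) → Matrix (Fin n) (Fin n) ℂ), (∀ i, (A i).PosDef) →
      (indGMMat k A).det = (((∏ i, (A i).det.re) ^ ((k : ℝ) + 1)⁻¹ : ℝ) : ℂ)
  | 0, A, hA => by simp [indGMMat, (hA 0).isHermitian.ofReal_re_det]
  | k + 1, A, hA => by
    set B := A (Fin.last (k + 1))
    have hB : B.PosDef := hA _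
    set b := B.det.re
    have hb : 0 < b := hB.re_det_pos
    have hT := hB.inv.cfc fun _ => Real.sqrt_pos.2
    have hA' (i : Fin (k + 1)) := (hA i.castSucc).mul_mul_same hT.isHermitian hT.isUnit
    have hdet_inv : B⁻¹.det.re = b⁻¹ := by
      rw [det_nonsing_inv, Ring.inverse_eq_inv', ← hB.isHermitian.ofReal_re_det,
        ← Complex.ofReal_inv, Complex.ofReal_re]
    have hdet_conj (i : Fin (k + 1)) :
        (cfc Real.sqrt B⁻¹ * A i.castSucc * cfc Real.sqrt B⁻¹).det.re =
          b⁻¹ * (A i.castSucc).det.re := by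
      rw [det_mul, det_mul, hB.inv.det_cfc_sqrt, hdet_inv,
        ← (hA i.castSucc).isHermitian.ofReal_re_det]
      simp only [← Complex.ofReal_mul, Complex.ofReal_re]
      rw [mul_right_comm, Real.mul_self_sqrt (inv_nonneg.2 hb.le)]
    rw [indGMMat, det_mul, det_mul, hB.det_cfc_sqrt, (posDef_indGMMat k _ hA').det_cfc_rpow,
      det_indGMMat k _ hA', Complex.ofReal_re, Finset.prod_congr rfl fun i _ => hdet_conj i,
      Finset.prod_mul_distrib, Finset.prod_const, Finset.card_univ, Fintype.card_fin,
      Fin.prod_univ_castSucc (fun i => (A i).det.re), ← Complex.ofReal_mul, ← Complex.ofReal_mul,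
      Real.sqrt_mul_rpow_mul_sqrt hb
        (Finset.prod_nonneg fun i _ => (hA i.castSucc).re_det_pos.le)]
    congr 3
    push_cast
    ring

/-- **Determinant identity for the inductive geometric mean of matrices.**
`det Gₖ(A₁,…,Aₖ) = (det A₁ ⋯ det Aₖ)^{1/k}` for positive definite complex matrices. -/
theorem indGMMat_det {n : ℕ} (k : ℕ)
    (A : Fin (k + 1) → Matrix (Fin n) (Fin n) ℂ) (hA : ∀ i, (A i).PosDef) :
    (indGMMat k A).det = (∏ i, (A i).det) ^ (((k : ℂ) + 1)⁻¹) := by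
  have hprod : ∏ i, (A i).det = ((∏ i, (A i).det.re : ℝ) : ℂ) := by
    rw [Complex.ofReal_prod]
    exact Finset.prod_congr rfl fun i _ => ((hA i).isHermitian.ofReal_re_det).symm
  rw [det_indGMMat k A hA, hprod,
    Complex.ofReal_cpow (Finset.prod_nonneg fun i _ => (hA i).re_det_pos.le)]
  push_cast
  rfl
end
end
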